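/- Let M, N be positive integers, L = min(M, N), and l ∈ {1, ..., L−1}. Fix K = B + β with B ∈ ℕ, 0 < β ≤ 1, satisfying (M−l+1)(N−l+1)/(N+M−1−2(l−1)) + l − 1 < K ≤ (M−l)(N−l)/(N+M−1−2l) + l. Then the minimum of ∑_{i=1}^L (|N−M| + 2i − 1) α_i over α_1 ≥ ... ≥ α_L ≥ 0 with ∑_{i=0}^{B−1} α_{L−i} + β α_{L−B} = K − r and 0 ≤ r ≤ K equals (M−l)(N−l)·(K−r)/(K−l), achieved at α_L = ... = α_{L−l+1} = 0 and α_{L−l} = ... = α_1 = (K−r)/(K−l). -/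

import Mathlib

/-!
Weak LP duality. The weights `w i = |N - M| + 2 i - 1` have partial sums
`W j = (M - (L - j)) (N - (L - j))`, and the constraint is `∑ γ i α i = K - r` with
`γ = tailWeight (L - B) β`, whose partial sums are `0` for `j < L - B` and `K - (L - j)` after.
By Abel summation, `λ (K - r) ≤ ∑ w i α i` for every nonincreasing `α` with `α L ≥ 0` as soon as
`λ (K - m) ≤ (M - m) (N - m)` for all `m ≤ B`. For `λ = (M - l) (N - l) / (K - l)` the defect
`(M - m) (N - m) (K - l) - (M - l) (N - l) (K - m)` is a convex quadratic in `m` vanishing at `l`,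
and the two bounds on `K` say exactly that it is nonnegative at `m = l ∓ 1`, hence at every
integer `m`. The step vector equal to `(K - r) / (K - l)` on `1, …, L - l` attains the bound.
-/
open Finset

section Sums

variable {R : Type*} [CommRing R]

theorem sum_Icc_add_two_mul_sub_one (A : R) (j : ℕ) :
    ∑ i ∈ Icc 1 j, (A + 2 * i - 1) = j * A + j ^ 2 := by
  induction j with
  | zero => simp
  | succ j ih =>
    rw [sum_Icc_succ_top (by omega), ih]
    push_cast
    ring

theorem sum_Icc_mul_ite_le (f : ℕ → R) {k n : ℕ} (hk : k ≤ n) (c : R) :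
    ∑ i ∈ Icc 1 n, f i * (if i ≤ k then c else 0) = (∑ i ∈ Icc 1 k, f i) * c := by
  simp_rw [mul_ite, mul_zero]
  rw [← sum_filter, sum_mul]
  congr 1
  ext i
  simp only [mem_filter, mem_Icc]
  omega

theorem sum_range_comp_sub_eq_sum_Ioc (f : ℕ → R) {B L : ℕ} (hBL : B ≤ L) :
    ∑ i ∈ range B, f (L - i) = ∑ i ∈ Ioc (L - B) L, f i := by
  apply sum_nbij' (fun i => L - i) (fun i => L - i) <;> intro i hi <;> simp at hi ⊢ <;> omega

def tailWeight (s : ℕ) (β : R) (i : ℕ) : R :=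
  if i < s then 0 else if i = s then β else 1

theorem sum_Icc_tailWeight_mul_of_lt {s j : ℕ} (hj : j < s) (β : R) (f : ℕ → R) :
    ∑ i ∈ Icc 1 j, tailWeight s β i * f i = 0 :=
  sum_eq_zero fun i hi => by
    simp only [mem_Icc] at hi
    rw [tailWeight, if_pos (by omega), zero_mul]

theorem sum_Icc_tailWeight_mul {s j : ℕ} (hs : 1 ≤ s) (hsj : s ≤ j) (β : R) (f : ℕ → R) :
    ∑ i ∈ Icc 1 j, tailWeight s β i * f i = β * f s + ∑ i ∈ Ioc s j, f i := by
  rw [show Icc 1 j = Ioc 0 j from Icc_add_one_left_eq_Ioc 0 j,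
    ← sum_Ioc_consecutive _ (Nat.zero_le s) hsj]
  congr 1
  · rw [sum_eq_single_of_mem s (by simp; omega)]
    · simp [tailWeight]
    · intro i hi his
      simp only [mem_Ioc] at hi
      rw [tailWeight, if_pos (by omega), zero_mul]
  · refine sum_congr rfl fun i hi => ?_
    simp only [mem_Ioc] at hi
    rw [tailWeight, if_neg (by omega), if_neg (by omega), one_mul]

end Sums

section Abel

variable {R : Type*} [CommRing R] [LinearOrder R] [IsStrictOrderedRing R]

theorem partialSum_mul_le_sum_Icc_mul {n : ℕ} {d α : ℕ → R}
    (hα : ∀ i ∈ Icc 1 (n - 1), α (i + 1) ≤ α i) (hd : ∀ j ≤ n, 0 ≤ ∑ i ∈ Icc 1 j, d i) :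
    (∑ i ∈ Icc 1 n, d i) * α n ≤ ∑ i ∈ Icc 1 n, d i * α i := by
  induction n with
  | zero => simp
  | succ n ih =>
    rw [sum_Icc_succ_top (by omega), sum_Icc_succ_top (by omega), add_mul]
    rcases Nat.eq_zero_or_pos n with rfl | hn
    · simp
    have hstep : α (n + 1) ≤ α n := hα n (by simp; omega)
    have hle := ih (fun i hi => hα i (by simp at hi ⊢; omega)) (fun j hj => hd j (by omega))
    have := mul_le_mul_of_nonneg_left hstep (hd n (by omega))
    linarith

theorem sum_Icc_mul_nonneg_of_partialSum_nonneg {n : ℕ} {d α : ℕ → R}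
    (hα : ∀ i ∈ Icc 1 (n - 1), α (i + 1) ≤ α i) (hαn : 0 ≤ α n)
    (hd : ∀ j ≤ n, 0 ≤ ∑ i ∈ Icc 1 j, d i) :
    0 ≤ ∑ i ∈ Icc 1 n, d i * α i :=
  (mul_nonneg (hd n le_rfl) hαn).trans (partialSum_mul_le_sum_Icc_mul hα hd)

end Abel

theorem quadratic_nonneg_of_int_offset {a b c x₀ : ℝ} (ha : 0 ≤ a)
    (h₀ : a * x₀ ^ 2 + b * x₀ + c = 0) (hlo : 0 ≤ a * (x₀ - 1) ^ 2 + b * (x₀ - 1) + c)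
    (hhi : 0 ≤ a * (x₀ + 1) ^ 2 + b * (x₀ + 1) + c) (n : ℤ) :
    0 ≤ a * (x₀ + n) ^ 2 + b * (x₀ + n) + c := by
  have hn₀ := congrArg ((n : ℝ) * ·) h₀
  rcases le_or_gt 0 n with hn | hn
  · have h : (0 : ℝ) ≤ n * (n - 1) := by
      rcases hn.eq_or_lt with rfl | hn
      · simp
      · exact_mod_cast mul_nonneg hn.le (by omega : (0 : ℤ) ≤ n - 1)
    nlinarith [mul_nonneg (by exact_mod_cast hn : (0 : ℝ) ≤ n) hhi, mul_nonneg ha h]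
  · have h : (0 : ℝ) ≤ n * (n + 1) := by
      exact_mod_cast mul_nonneg_of_nonpos_of_nonpos hn.le (by omega : n + 1 ≤ 0)
    nlinarith [mul_nonneg (by exact_mod_cast (neg_nonneg.2 hn.le) : (0 : ℝ) ≤ -n) hlo,
      mul_nonneg ha h]

theorem mul_abs_sub_add_sq (M N t : ℝ) :
    t * |N - M| + t ^ 2 = (M - (min M N - t)) * (N - (min M N - t)) := by
  rcases le_total M N with h | h
  · rw [min_eq_left h, abs_of_nonneg (by linarith)]; ring
  · rw [min_eq_right h, abs_of_nonpos (by linarith)]; ring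

theorem sum_Icc_weight {M N L j : ℕ} (hL : L = min M N) (hj : j ≤ L) :
    ∑ i ∈ Icc 1 j, (|(N : ℝ) - M| + 2 * i - 1) = (M - (L - j : ℕ)) * (N - (L - j : ℕ)) := by
  rw [sum_Icc_add_two_mul_sub_one, mul_abs_sub_add_sq, Nat.cast_sub hj, hL, Nat.cast_min]

theorem le_sum_weight_mul_of_dual {M N L B : ℕ} {β K r lam : ℝ} (hL : L = min M N) (hBL : B < L)
    (hKB : K = B + β) (hdual : ∀ m ≤ B, lam * (K - m) ≤ (M - m) * (N - m)) {α : ℕ → ℝ}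
    (hα : ∀ i ∈ Icc 1 (L - 1), α (i + 1) ≤ α i) (hαL : 0 ≤ α L)
    (hcon : (∑ i ∈ range B, α (L - i)) + β * α (L - B) = K - r) :
    lam * (K - r) ≤ ∑ i ∈ Icc 1 L, (|(N : ℝ) - M| + 2 * i - 1) * α i := by
  set γ := tailWeight (L - B) β
  have hcon' : ∑ i ∈ Icc 1 L, γ i * α i = K - r := by
    rw [sum_Icc_tailWeight_mul (by omega) (by omega), ← sum_range_comp_sub_eq_sum_Ioc _ hBL.le,
      ← hcon, add_comm]
  have hprefix : ∀ j ≤ L, 0 ≤ ∑ i ∈ Icc 1 j, ((|(N : ℝ) - M| + 2 * i - 1) - lam * γ i) := by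
    intro j hj
    have hγ : ∑ i ∈ Icc 1 j, γ i = ∑ i ∈ Icc 1 j, γ i * 1 := by simp only [mul_one]
    rw [sum_sub_distrib, ← mul_sum, hγ]
    rcases lt_or_ge j (L - B) with h | h
    · rw [sum_Icc_tailWeight_mul_of_lt h, sum_Icc_add_two_mul_sub_one]
      simp only [mul_zero, sub_zero]
      positivity
    · rw [sum_Icc_tailWeight_mul (by omega) h, sum_Icc_weight hL hj, sub_nonneg]
      have := hdual (L - j) (by omega)
      convert this using 2
      simp only [mul_one, sum_const, Nat.card_Ioc, nsmul_eq_mul]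
      push_cast [Nat.cast_sub hj, Nat.cast_sub h, Nat.cast_sub hBL.le]
      rw [hKB]; ring
  have hsplit : ∑ i ∈ Icc 1 L, ((|(N : ℝ) - M| + 2 * i - 1) - lam * γ i) * α i
      = ∑ i ∈ Icc 1 L, (|(N : ℝ) - M| + 2 * i - 1) * α i - lam * (K - r) := by
    rw [← hcon', mul_sum, ← sum_sub_distrib]
    simp only [sub_mul, mul_assoc]
  linarith [sum_Icc_mul_nonneg_of_partialSum_nonneg hα hαL hprefix]

section Interval

variable {M N l K : ℝ}

theorem lt_and_dual_pred_of_lower (hM : 1 ≤ M - l) (hN : 1 ≤ N - l)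
    (h : (M - l + 1) * (N - l + 1) / (N + M - 1 - 2 * (l - 1)) + l - 1 < K) :
    l < K ∧ (M - l) * (N - l) * (K - (l - 1)) ≤ (M - (l - 1)) * (N - (l - 1)) * (K - l) := by
  have h' : (M - l + 1) * (N - l + 1) < (K - l + 1) * (N + M - 1 - 2 * (l - 1)) :=
    (div_lt_iff₀ (by linarith)).1 (by linarith)
  refine ⟨?_, by linear_combination h'.le⟩
  nlinarith

theorem le_min_and_dual_succ_of_upper (hM : 1 ≤ M - l) (hN : 1 ≤ N - l)
    (h : K ≤ (M - l) * (N - l) / (N + M - 1 - 2 * l) + l) :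
    K ≤ min M N ∧ (M - l) * (N - l) * (K - (l + 1)) ≤ (M - (l + 1)) * (N - (l + 1)) * (K - l) := by
  have h' : (K - l) * (N + M - 1 - 2 * l) ≤ (M - l) * (N - l) :=
    (le_div_iff₀ (by linarith)).1 (by linarith)
  refine ⟨?_, by linear_combination h'⟩
  rcases le_total M N with hMN | hMN
  · rw [min_eq_left hMN]; nlinarith
  · rw [min_eq_right hMN]; nlinarith

theorem dual_of_dual_pred_of_dual_succ (hlK : l ≤ K)
    (hpred : (M - l) * (N - l) * (K - (l - 1)) ≤ (M - (l - 1)) * (N - (l - 1)) * (K - l))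
    (hsucc : (M - l) * (N - l) * (K - (l + 1)) ≤ (M - (l + 1)) * (N - (l + 1)) * (K - l))
    (n : ℤ) : (M - l) * (N - l) * (K - (l + n)) ≤ (M - (l + n)) * (N - (l + n)) * (K - l) := by
  have := quadratic_nonneg_of_int_offset (a := K - l) (b := (M - l) * (N - l) - (K - l) * (M + N))
    (c := (K - l) * M * N - (M - l) * (N - l) * K) (x₀ := l) (sub_nonneg.2 hlK) (by ring)
    (by linear_combination hpred) (by linear_combination hsucc) n
  linear_combination this

end Interval

theorem step_feasible {L l B : ℕ} {β K c : ℝ} (hlB : l ≤ B) (hBL : B < L) (hKB : K = B + β)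
    (hc : 0 ≤ c) :
    let α : ℕ → ℝ := fun i => if i ≤ L - l then c else 0
    (∀ i ∈ Icc 1 (L - 1), α (i + 1) ≤ α i) ∧ 0 ≤ α L ∧
      (∑ i ∈ range B, α (L - i)) + β * α (L - B) = (K - l) * c := by
  refine ⟨fun i _ => ?_, by dsimp only; split_ifs <;> simp [hc], ?_⟩
  · dsimp only
    split_ifs <;> first | rfl | exact hc | omega
  · have hsum : ∑ i ∈ range B, (if L - i ≤ L - l then c else 0) = ∑ i ∈ Ico l B, c := by
      rw [← sum_filter]
      congr 1
      ext i
      simp only [mem_filter, mem_range, mem_Ico]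
      omega
    simp only [hsum, sum_const, Nat.card_Ico, nsmul_eq_mul, if_pos (by omega : L - B ≤ L - l),
      Nat.cast_sub hlB, hKB]
    ring

theorem stmt4_general (M N : ℕ)
    (L : ℕ) (hL : L = min M N) (l : ℕ) (hl1 : 1 ≤ l) (hlL : l ≤ L - 1)
    (B : ℕ) (β K r : ℝ)
    (hβ0 : 0 < β) (hβ1 : β ≤ 1) (hKB : K = (B : ℝ) + β)
    (hKlow : ((M : ℝ) - l + 1) * ((N : ℝ) - l + 1) / ((N : ℝ) + M - 1 - 2 * ((l : ℝ) - 1))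
        + l - 1 < K)
    (hKhigh : K ≤ ((M : ℝ) - l) * ((N : ℝ) - l) / ((N : ℝ) + M - 1 - 2 * l) + l)
    (hrK : r ≤ K) :
    IsLeast {x : ℝ | ∃ α : ℕ → ℝ,
        (∀ i ∈ Icc 1 (L - 1), α (i + 1) ≤ α i) ∧ 0 ≤ α L ∧
        (∑ i ∈ Finset.range B, α (L - i)) + β * α (L - B) = K - r ∧
        x = ∑ i ∈ Icc 1 L, (|(N : ℝ) - M| + 2 * i - 1) * α i}
      (((M : ℝ) - l) * ((N : ℝ) - l) * (K - r) / (K - l)) ∧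
    ((let α : ℕ → ℝ := fun i => if i ≤ L - l then (K - r) / (K - l) else 0
      (∀ i ∈ Icc 1 (L - 1), α (i + 1) ≤ α i) ∧ 0 ≤ α L ∧
        (∑ i ∈ Finset.range B, α (L - i)) + β * α (L - B) = K - r ∧
        ∑ i ∈ Icc 1 L, (|(N : ℝ) - M| + 2 * i - 1) * α i
          = ((M : ℝ) - l) * ((N : ℝ) - l) * (K - r) / (K - l))) := by
  have hM : (1 : ℝ) ≤ M - l := by rw [le_sub_iff_add_le']; exact_mod_cast (by omega : l + 1 ≤ M)
  have hN : (1 : ℝ) ≤ N - l := by rw [le_sub_iff_add_le']; exact_mod_cast (by omega : l + 1 ≤ N)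
  obtain ⟨hlK, hpred⟩ := lt_and_dual_pred_of_lower hM hN hKlow
  obtain ⟨hKmin, hsucc⟩ := le_min_and_dual_succ_of_upper hM hN hKhigh
  have hlB : l ≤ B := Nat.lt_succ_iff.1 (by exact_mod_cast (by linarith : (l : ℝ) < B + 1))
  have hBL : B < L := by
    rw [← Nat.cast_lt (α := ℝ), hL, Nat.cast_min]
    linarith
  have hKl : 0 < K - l := sub_pos.2 hlK
  obtain ⟨hα, hαL, hcon⟩ := step_feasible hlB hBL hKB (div_nonneg (sub_nonneg.2 hrK) hKl.le)
  refine ⟨⟨⟨fun i => if i ≤ L - l then (K - r) / (K - l) else 0, hα, hαL, ?con, Eq.symm ?obj⟩, ?_⟩,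
    hα, hαL, ?con, ?obj⟩
  case con => rw [hcon]; field_simp
  case obj =>
    rw [sum_Icc_mul_ite_le _ (Nat.sub_le L l), sum_Icc_weight hL (Nat.sub_le L l),
      Nat.sub_sub_self (by omega)]
    ring
  rintro x ⟨α, hα, hαL, hcon, rfl⟩
  have hdual (m : ℕ) : (M - l) * (N - l) / (K - l) * (K - m) ≤ (M - m) * (N - m) := by
    rw [div_mul_eq_mul_div, div_le_iff₀ hKl]
    simpa using dual_of_dual_pred_of_dual_succ hlK.le hpred hsucc ((m : ℤ) - l)
  calc ((M : ℝ) - l) * (N - l) * (K - r) / (K - l) = (M - l) * (N - l) / (K - l) * (K - r) := by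
        ring
    _ ≤ _ := le_sum_weight_mul_of_dual hL hBL hKB (fun m _ => hdual m) hα hαL hcon

/-- Diversity upper-bound optimization in the `l`-th interval of `K`:
the minimum of `∑_{i=1}^L (|N-M|+2i-1) α_i` subject to the constraints equals
`(M-l)(N-l)(K-r)/(K-l)`, achieved at `α_L = ⋯ = α_{L-l+1} = 0` and
`α_{L-l} = ⋯ = α_1 = (K-r)/(K-l)`. -/
theorem stmt4 (M N : ℕ) (hM : 0 < M) (hN : 0 < N)
    (L : ℕ) (hL : L = min M N) (l : ℕ) (hl1 : 1 ≤ l) (hlL : l ≤ L - 1)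
    (B : ℕ) (β K r : ℝ)
    (hβ0 : 0 < β) (hβ1 : β ≤ 1) (hKB : K = (B : ℝ) + β)
    (hKlow : ((M : ℝ) - l + 1) * ((N : ℝ) - l + 1) / ((N : ℝ) + M - 1 - 2 * ((l : ℝ) - 1))
        + l - 1 < K)
    (hKhigh : K ≤ ((M : ℝ) - l) * ((N : ℝ) - l) / ((N : ℝ) + M - 1 - 2 * l) + l)
    (hr0 : 0 ≤ r) (hrK : r ≤ K) :
    IsLeast {x : ℝ | ∃ α : ℕ → ℝ,
        (∀ i ∈ Icc 1 (L - 1), α (i + 1) ≤ α i) ∧ 0 ≤ α L ∧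
        (∑ i ∈ Finset.range B, α (L - i)) + β * α (L - B) = K - r ∧
        x = ∑ i ∈ Icc 1 L, (|(N : ℝ) - M| + 2 * i - 1) * α i}
      (((M : ℝ) - l) * ((N : ℝ) - l) * (K - r) / (K - l)) ∧
    ((let α : ℕ → ℝ := fun i => if i ≤ L - l then (K - r) / (K - l) else 0
      (∀ i ∈ Icc 1 (L - 1), α (i + 1) ≤ α i) ∧ 0 ≤ α L ∧
        (∑ i ∈ Finset.range B, α (L - i)) + β * α (L - B) = K - r ∧
        ∑ i ∈ Icc 1 L, (|(N : ℝ) - M| + 2 * i - 1) * α i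
          = ((M : ℝ) - l) * ((N : ℝ) - l) * (K - r) / (K - l))) :=
  stmt4_general M N L hL l hl1 hlL B β K r hβ0 hβ1 hKB hKlow hKhigh hrK
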